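/- Let A be an n×n nonsingular M-matrix (nonpositive off-diagonal entries, invertible, entrywise nonnegative inverse) and fix 0 ≤ m < n. Then the banded matrix T_m, defined by (T_m)_{ij} = a_{ij} if |i−j| ≤ m and 0 otherwise, is itself a nonsingular M-matrix: its off-diagonal entries are nonpositive, it is invertible, and T_m⁻¹ is entrywise nonnegative. -/

import Mathlib

/-!
The vector `x = A⁻¹ 𝟙` is positive and satisfies `A x = 𝟙`. Cutting `A` down to its band
only replaces nonpositive entries by `0`, so `A ≤ T` entrywise and `T x ≥ A x = 𝟙`. Hence `T`
is a Z-matrix with a positive vector `x` such that `T x > 0`, and every such matrix is a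
nonsingular M-matrix: a minimum-ratio argument shows that `T y ≥ 0` forces `y ≥ 0`, which
yields both the injectivity of `T` and the nonnegativity of the columns `T⁻¹ eⱼ`.
-/

open Matrix Finset

namespace Matrix

variable {ι : Type*} [Fintype ι]

theorem mulVec_le_mulVec_of_le {R κ : Type*} [Semiring R] [PartialOrder R] [IsOrderedRing R]
    {A B : Matrix κ ι R} (hAB : ∀ i j, A i j ≤ B i j) {x : ι → R} (hx : ∀ i, 0 ≤ x i)
    (i : κ) : (A *ᵥ x) i ≤ (B *ᵥ x) i :=
  sum_le_sum fun j _ => mul_le_mul_of_nonneg_right (hAB i j) (hx j)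

theorem pos_of_mulVec_pos {R : Type*} [Semiring R] [PartialOrder R] [IsOrderedRing R]
    {T : Matrix ι ι R} (hZ : ∀ i j, i ≠ j → T i j ≤ 0) {x : ι → R}
    (hx : ∀ i, 0 ≤ x i) (hTx : ∀ i, 0 < (T *ᵥ x) i) (i : ι) : 0 < x i := by
  refine (hx i).lt_of_ne' fun hxi => (hTx i).not_ge (sum_nonpos fun j _ => ?_)
  rcases eq_or_ne i j with rfl | hij
  · simp [hxi]
  · exact mul_nonpos_of_nonpos_of_nonneg (hZ i j hij) (hx j)

variable {𝕜 : Type*} [Field 𝕜] [LinearOrder 𝕜] [IsStrictOrderedRing 𝕜]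
  {T : Matrix ι ι 𝕜} {x : ι → 𝕜}

theorem nonneg_of_mulVec_nonneg (hZ : ∀ i j, i ≠ j → T i j ≤ 0) (hx : ∀ i, 0 < x i)
    (hTx : ∀ i, 0 < (T *ᵥ x) i) {y : ι → 𝕜} (hy : ∀ i, 0 ≤ (T *ᵥ y) i) (i : ι) :
    0 ≤ y i := by
  by_contra! hyi
  obtain ⟨k, -, hk⟩ := exists_min_image univ (fun j => y j / x j) ⟨i, mem_univ i⟩
  set c := y k / x k
  have hc : c < 0 := (hk i (mem_univ i)).trans_lt (div_neg_of_neg_of_pos hyi (hx i))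
  have hcx : ∀ j, c * x j ≤ y j := fun j => (le_div_iff₀ (hx j)).mp (hk j (mem_univ j))
  -- `y - c • x ≥ 0` vanishes at `k`, so row `k` only pairs it with nonpositive entries.
  have hk_row : (T *ᵥ (y - c • x)) k ≤ 0 := by
    refine sum_nonpos fun j _ => ?_
    rcases eq_or_ne k j with rfl | hkj
    · simp [c, (hx k).ne']
    · exact mul_nonpos_of_nonpos_of_nonneg (hZ k j hkj) (sub_nonneg.mpr (hcx j))
  rw [mulVec_sub, mulVec_smul, Pi.sub_apply, Pi.smul_apply, smul_eq_mul] at hk_row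
  linarith [mul_neg_of_neg_of_pos hc (hTx k), hy k]

variable [DecidableEq ι]

theorem isUnit_of_mulVec_pos (hZ : ∀ i j, i ≠ j → T i j ≤ 0) (hx : ∀ i, 0 < x i)
    (hTx : ∀ i, 0 < (T *ᵥ x) i) : IsUnit T := by
  refine mulVec_injective_iff_isUnit.mp fun y z hyz => funext fun i => le_antisymm ?_ ?_
  · exact sub_nonneg.mp <|
      nonneg_of_mulVec_nonneg hZ hx hTx (y := z - y) (by simp [mulVec_sub, hyz]) i
  · exact sub_nonneg.mp <|
      nonneg_of_mulVec_nonneg hZ hx hTx (y := y - z) (by simp [mulVec_sub, hyz]) i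

theorem inv_nonneg_of_mulVec_pos (hZ : ∀ i j, i ≠ j → T i j ≤ 0) (hx : ∀ i, 0 < x i)
    (hTx : ∀ i, 0 < (T *ᵥ x) i) (i j : ι) : 0 ≤ T⁻¹ i j := by
  have hdet : IsUnit T.det := (isUnit_iff_isUnit_det T).mp (isUnit_of_mulVec_pos hZ hx hTx)
  have hcol : T *ᵥ (T⁻¹ *ᵥ Pi.single j 1) = Pi.single j 1 := by
    rw [mulVec_mulVec, mul_nonsing_inv T hdet, one_mulVec]
  have := nonneg_of_mulVec_nonneg hZ hx hTx (y := T⁻¹ *ᵥ Pi.single j 1)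
    (fun k => by rw [hcol]; exact (Pi.single_nonneg (α := fun _ => 𝕜)).mpr zero_le_one k) i
  simpa [mulVec_single_one] using this

end Matrix

theorem banded_part_of_Mmatrix_is_Mmatrix_general (n m : ℕ)
    (A T : Matrix (Fin n) (Fin n) ℝ)
    (hZ : ∀ i j, i ≠ j → A i j ≤ 0)
    (hA : IsUnit A)
    (hAinv : ∀ i j, 0 ≤ A⁻¹ i j)
    (hT : ∀ i j, T i j = if |(i : ℤ) - (j : ℤ)| ≤ (m : ℤ) then A i j else 0) :
    (∀ i j, i ≠ j → T i j ≤ 0) ∧ IsUnit T ∧ ∀ i j, 0 ≤ T⁻¹ i j := by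
  have hTZ : ∀ i j, i ≠ j → T i j ≤ 0 := fun i j hij => by
    rw [hT]; split_ifs
    exacts [hZ i j hij, le_rfl]
  have hAT : ∀ i j, A i j ≤ T i j := fun i j => by
    rw [hT]; split_ifs with hband
    · rfl
    · exact hZ i j (by rintro rfl; simp at hband)
  set x : Fin n → ℝ := A⁻¹ *ᵥ 1
  have hx_nonneg : ∀ i, 0 ≤ x i := fun i =>
    dotProduct_nonneg_of_nonneg (hAinv i) zero_le_one
  have hAx : ∀ i, 0 < (A *ᵥ x) i := fun i => by
    rw [mulVec_mulVec, mul_nonsing_inv A ((isUnit_iff_isUnit_det A).mp hA), one_mulVec]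
    exact zero_lt_one
  have hx : ∀ i, 0 < x i := pos_of_mulVec_pos hZ hx_nonneg hAx
  have hTx : ∀ i, 0 < (T *ᵥ x) i := fun i =>
    (hAx i).trans_le (mulVec_le_mulVec_of_le hAT hx_nonneg i)
  exact ⟨hTZ, isUnit_of_mulVec_pos hTZ hx hTx, inv_nonneg_of_mulVec_pos hTZ hx hTx⟩

/-- The banded part T_m of a nonsingular M-matrix is itself a nonsingular M-matrix. -/
theorem banded_part_of_Mmatrix_is_Mmatrix (n m : ℕ) (hm : m < n)
    (A T : Matrix (Fin n) (Fin n) ℝ)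
    (hZ : ∀ i j, i ≠ j → A i j ≤ 0)
    (hA : IsUnit A)
    (hAinv : ∀ i j, 0 ≤ A⁻¹ i j)
    (hT : ∀ i j, T i j = if |(i : ℤ) - (j : ℤ)| ≤ (m : ℤ) then A i j else 0) :
    (∀ i j, i ≠ j → T i j ≤ 0) ∧ IsUnit T ∧ ∀ i j, 0 ≤ T⁻¹ i j :=
  banded_part_of_Mmatrix_is_Mmatrix_general n m A T hZ hA hAinv hT
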